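/- arXiv:1903.02185 — 4 statements merged into one kernel-verified Lean document; each statement's English description precedes it below -/
import Mathlib

section
/- There exists an instance with 2 men and 2 women, each with complete strict preference lists, admitting no strongly stable noncrossing matching: with preferences P_{m1} = (w2, w1), P_{m2} = (w1, w2), P_{w1} = (m2, m1), P_{w2} = (m1, m2), every noncrossing matching admits a blocking pair. -/
/-- Pairs `(i,x)` and `(j,y)` cross iff `(i-j)*(x-y) < 0`. -/
def Crosses {n : ℕ} (p q : Fin n × Fin n) : Prop :=
  (((p.1 : ℕ) : ℤ) - ((q.1 : ℕ) : ℤ)) * (((p.2 : ℕ) : ℤ) - ((q.2 : ℕ) : ℤ)) < 0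

/-- A matching is a set of man-woman pairs in which no man and no woman
appears twice (a partial injection). -/
def IsMatching {n : ℕ} (M : Finset (Fin n × Fin n)) : Prop :=
  ∀ p ∈ M, ∀ q ∈ M, (p.1 = q.1 ∨ p.2 = q.2) → p = q

/-- A matching is noncrossing if no two of its pairs cross. -/
def Noncrossing {n : ℕ} (M : Finset (Fin n × Fin n)) : Prop :=
  ∀ p ∈ M, ∀ q ∈ M, ¬ Crosses p q

/-- Rank of woman `w` in man `m`'s list (lower = more preferred):
`P_{m1} = (w2, w1)`, `P_{m2} = (w1, w2)`. -/
def mRank : Fin 2 → Fin 2 → ℕ :=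
  fun m w => if m = 0 then (if w = 1 then 0 else 1) else (if w = 0 then 0 else 1)

/-- Rank of man `m` in woman `w`'s list:
`P_{w1} = (m2, m1)`, `P_{w2} = (m1, m2)`. -/
def wRank : Fin 2 → Fin 2 → ℕ :=
  fun w m => if w = 0 then (if m = 1 then 0 else 1) else (if m = 0 then 0 else 1)

/-- `(m, w)` is a blocking pair w.r.t. `M`: they are not matched together,
`m` prefers `w` to his partner (being unmatched is worst), and
`w` prefers `m` to her partner. -/
def IsBlocking (M : Finset (Fin 2 × Fin 2)) (m w : Fin 2) : Prop :=
  (m, w) ∉ M ∧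
  (∀ w', (m, w') ∈ M → mRank m w < mRank m w') ∧
  (∀ m', (m', w) ∈ M → wRank w m < wRank w m')

/-! In this instance `m₁` and `w₂` rank each other first, so they block every matching that
separates them. A matching containing `(m₁, w₂)` leaves `m₂` and `w₁` single: `(m₂, w₁)` would
cross `(m₁, w₂)`, and the only other pairs share an agent with it. Then `(m₂, w₁)` blocks. -/

theorem crosses_of_fst_lt_of_snd_lt {n : ℕ} {p q : Fin n × Fin n} (h₁ : p.1 < q.1)
    (h₂ : q.2 < p.2) : Crosses p q := by
  have h₁' : ((p.1 : ℕ) : ℤ) < ((q.1 : ℕ) : ℤ) := by exact_mod_cast h₁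
  have h₂' : ((q.2 : ℕ) : ℤ) < ((p.2 : ℕ) : ℤ) := by exact_mod_cast h₂
  exact mul_neg_of_neg_of_pos (sub_neg.2 h₁') (sub_pos.2 h₂')

theorem isBlocking_zero_one {M : Finset (Fin 2 × Fin 2)} (h : ((0 : Fin 2), (1 : Fin 2)) ∉ M) :
    IsBlocking M 0 1 := by
  refine ⟨h, fun w hw => ?_, fun m hm => ?_⟩
  · fin_cases w
    · decide
    · exact absurd hw h
  · fin_cases m
    · exact absurd hm h
    · decide

section
variable {M : Finset (Fin 2 × Fin 2)} (hM : IsMatching M) (hN : Noncrossing M)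
  (h : ((0 : Fin 2), (1 : Fin 2)) ∈ M)
include hM hN h

theorem not_mem_one_of_mem_zero_one (w : Fin 2) : ((1 : Fin 2), w) ∉ M := by
  intro hw
  fin_cases w
  · exact hN _ h _ hw (crosses_of_fst_lt_of_snd_lt (by decide) (by decide))
  · exact absurd (hM _ hw _ h (Or.inr rfl)) (by decide)

theorem not_mem_zero_of_mem_zero_one (m : Fin 2) : (m, (0 : Fin 2)) ∉ M := by
  intro hm
  fin_cases m
  · exact absurd (hM _ hm _ h (Or.inl rfl)) (by decide)
  · exact not_mem_one_of_mem_zero_one hM hN h 0 hm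

theorem isBlocking_one_zero : IsBlocking M 1 0 :=
  ⟨not_mem_one_of_mem_zero_one hM hN h 0,
    fun w hw => absurd hw (not_mem_one_of_mem_zero_one hM hN h w),
    fun m hm => absurd hm (not_mem_zero_of_mem_zero_one hM hN h m)⟩

end

/-- In the 2×2 instance above, every noncrossing matching admits a blocking
pair; hence no strongly stable noncrossing matching exists. -/
theorem no_SSNM :
    ∀ M : Finset (Fin 2 × Fin 2), IsMatching M → Noncrossing M →
      ∃ m w : Fin 2, IsBlocking M m w := by
  intro M hM hN
  by_cases h : ((0 : Fin 2), (1 : Fin 2)) ∈ M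
  · exact ⟨1, 0, isBlocking_one_zero hM hN h⟩
  · exact ⟨0, 1, isBlocking_zero_one h⟩
end

section
/- For every instance with n men and n women with strict (possibly incomplete) preference lists, there exists a weakly stable noncrossing matching. -/
lemma crosses_iff {n : ℕ} (p q : Fin n × Fin n) :
    Crosses p q ↔ (p.1 < q.1 ∧ q.2 < p.2) ∨ (q.1 < p.1 ∧ p.2 < q.2) := by
  unfold Crosses
  rw [mul_neg_iff]
  constructor
  · rintro (⟨h1, h2⟩ | ⟨h1, h2⟩)
    · right
      refine ⟨?_, ?_⟩
      · have := sub_pos.mp h1; exact_mod_cast this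
      · have := sub_neg.mp h2; exact_mod_cast this
    · left
      refine ⟨?_, ?_⟩
      · have := sub_neg.mp h1; exact_mod_cast this
      · have := sub_pos.mp h2; exact_mod_cast this
  · rintro (⟨h1, h2⟩ | ⟨h1, h2⟩)
    · right
      refine ⟨sub_neg.mpr ?_, sub_pos.mpr ?_⟩ <;> exact_mod_cast ‹_›
    · left
      refine ⟨sub_pos.mpr ?_, sub_neg.mpr ?_⟩
      · exact_mod_cast h1
      · exact_mod_cast h2

lemma crosses_self {n : ℕ} (p : Fin n × Fin n) : ¬ Crosses p p := by
  simp [crosses_iff]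

lemma crosses_comm {n : ℕ} (p q : Fin n × Fin n) : Crosses p q ↔ Crosses q p := by
  rw [crosses_iff, crosses_iff]; tauto

lemma mk_cross1 {n : ℕ} {p q : Fin n × Fin n} (h1 : p.1 < q.1) (h2 : q.2 < p.2) :
    Crosses p q := (crosses_iff p q).mpr (Or.inl ⟨h1, h2⟩)

lemma mk_cross2 {n : ℕ} {p q : Fin n × Fin n} (h1 : q.1 < p.1) (h2 : p.2 < q.2) :
    Crosses p q := (crosses_iff p q).mpr (Or.inr ⟨h1, h2⟩)

lemma noncross1 {n : ℕ} {p q : Fin n × Fin n} (h : ¬ Crosses p q) (hlt : p.1 < q.1) :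
    p.2 ≤ q.2 := by
  by_contra hc
  exact h (mk_cross1 hlt (not_le.mp hc))

lemma noncross2 {n : ℕ} {p q : Fin n × Fin n} (h : ¬ Crosses p q) (hlt : q.1 < p.1) :
    q.2 ≤ p.2 := by
  by_contra hc
  exact h (mk_cross2 hlt (not_le.mp hc))

section WSNM

variable {n : ℕ} (acc : Fin n → Fin n → Prop) (mr wr : Fin n → Fin n → ℕ)

def Blk (M : Finset (Fin n × Fin n)) (m w : Fin n) : Prop :=
  acc m w ∧ (m, w) ∉ M ∧ (∀ w', (m, w') ∈ M → mr m w < mr m w') ∧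
    (∀ m', (m', w) ∈ M → wr w m < wr w m') ∧ ∀ q ∈ M, ¬ Crosses (m, w) q

def SInv (M : Finset (Fin n × Fin n)) : Prop :=
  ∀ m w, Blk acc mr wr M m w →
    (∀ p ∈ M, p.2 = w → m < p.1) ∧ (∀ p ∈ M, p.1 = m → p.2 < w)

noncomputable def rnk (m w : Fin n) : ℕ :=
  {w' | acc m w' ∧ mr m w' < mr m w}.ncard

lemma rnk_lt_rnk {m w w' : Fin n} (h1 : acc m w) (h2 : mr m w < mr m w') :
    rnk acc mr m w < rnk acc mr m w' := by
  apply Set.ncard_lt_ncard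
  · constructor
    · intro x hx; exact ⟨hx.1, hx.2.trans h2⟩
    · intro hsub
      have : w ∈ {w'' | acc m w'' ∧ mr m w'' < mr m w} := hsub ⟨h1, h2⟩
      simp at this
  · exact Set.toFinite _

lemma rnk_lt_n (m w : Fin n) : rnk acc mr m w < n := by
  have hne : Nonempty (Fin n) := ⟨m⟩
  have hn : 0 < n := Fin.pos_iff_nonempty.mpr hne
  have hsub : {w' | acc m w' ∧ mr m w' < mr m w} ⊆ (Set.univ \ {w}) := by
    intro x hx
    refine ⟨trivial, ?_⟩
    simp only [Set.mem_singleton_iff]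
    rintro rfl
    exact lt_irrefl _ hx.2
  calc rnk acc mr m w ≤ (Set.univ \ {w} : Set (Fin n)).ncard :=
        Set.ncard_le_ncard hsub (Set.toFinite _)
    _ = (Set.univ : Set (Fin n)).ncard - 1 :=
        Set.ncard_diff_singleton_of_mem (Set.mem_univ w)
    _ < n := by rw [Set.ncard_univ, Nat.card_eq_fintype_card, Fintype.card_fin]; omega

noncomputable def wfn (p : Fin n × Fin n) : ℕ :=
  (n + 1) ^ (n - 1 - (p.1 : ℕ)) * (n - rnk acc mr p.1 p.2)

noncomputable def Phi (M : Finset (Fin n × Fin n)) : ℕ := ∑ p ∈ M, wfn acc mr p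

lemma step (M : Finset (Fin n × Fin n)) (hM : IsMatching M)
    (hacc : ∀ p ∈ M, acc p.1 p.2) (hnc : Noncrossing M)
    (hinv : SInv acc mr wr M) (a b : Fin n)
    (hb : Blk acc mr wr M a b)
    (hmax : ∀ m w, Blk acc mr wr M m w → m ≤ a)
    (hfav : ∀ w, Blk acc mr wr M a w → mr a b ≤ mr a w) :
    ∃ M' : Finset (Fin n × Fin n), IsMatching M' ∧ (∀ p ∈ M', acc p.1 p.2) ∧
      Noncrossing M' ∧ SInv acc mr wr M' ∧ Phi acc mr M < Phi acc mr M' := by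
  classical
  obtain ⟨hbacc, hbnot, hbm, hbw, hbnc⟩ := id hb
  have K1 : ∀ p ∈ M, p.2 = b → a < p.1 := (hinv a b hb).1
  have K2 : ∀ p ∈ M, p.1 = a → p.2 < b := (hinv a b hb).2
  set M0 : Finset (Fin n × Fin n) := M.filter (fun p => ¬(p.1 = a ∨ p.2 = b)) with hM0def
  set M' : Finset (Fin n × Fin n) := insert (a, b) M0 with hM'def
  have memM' : ∀ q : Fin n × Fin n, q ∈ M' ↔ q = (a, b) ∨ (q ∈ M ∧ q.1 ≠ a ∧ q.2 ≠ b) := by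
    intro q
    simp only [hM'def, hM0def, Finset.mem_insert, Finset.mem_filter]
    tauto
  have hsub0 : M0 ⊆ M := Finset.filter_subset _ _
  have heab : (a, b) ∈ M' := Finset.mem_insert_self _ _
  refine ⟨M', ?_, ?_, ?_, ?_, ?_⟩
  · -- IsMatching
    intro p hp q hq hpq
    rw [memM'] at hp hq
    rcases hp with rfl | ⟨hpM, hp1, hp2⟩ <;> rcases hq with rfl | ⟨hqM, hq1, hq2⟩
    · rfl
    · exact absurd hpq (by push_neg; exact ⟨fun h => hq1 h.symm, fun h => hq2 h.symm⟩)
    · exact absurd hpq (by push_neg; exact ⟨hp1, hp2⟩)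
    · exact hM p hpM q hqM hpq
  · -- acceptable
    intro p hp
    rw [memM'] at hp
    rcases hp with rfl | ⟨hpM, _, _⟩
    · exact hbacc
    · exact hacc p hpM
  · -- Noncrossing
    intro p hp q hq
    rw [memM'] at hp hq
    rcases hp with rfl | ⟨hpM, _, _⟩ <;> rcases hq with rfl | ⟨hqM, _, _⟩
    · exact crosses_self _
    · exact hbnc q hqM
    · rw [crosses_comm]; exact hbnc p hpM
    · exact hnc p hpM q hqM
  · -- SInv
    rintro m w ⟨hacc2, hnot2, hman2, hwom2, hnc2⟩
    have hne : (m, w) ≠ (a, b) := fun h => hnot2 (h ▸ heab)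
    have hncab : ¬ Crosses (m, w) (a, b) := hnc2 _ heab
    have hMM' : ∀ q : Fin n × Fin n, q ∈ M → q.1 ≠ a → q.2 ≠ b → q ∈ M' :=
      fun q hq h1 h2 => (memM' q).mpr (Or.inr ⟨hq, h1, h2⟩)
    rcases lt_trichotomy m a with hma | hma | hma
    · -- CASE m < a
      have hwb : w ≤ b := noncross1 hncab hma
      rcases eq_or_lt_of_le hwb with hweq | hwlt
      · -- B1a : w = b
        subst hweq
        constructor
        · intro p hp hp2
          rw [memM'] at hp
          rcases hp with rfl | ⟨hpM, hp1, hp2'⟩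
          · exact hma
          · exact absurd hp2 hp2'
        · intro p hp hp1
          rw [memM'] at hp
          rcases hp with rfl | ⟨hpM, hpa, hpb⟩
          · exact absurd hp1.symm (ne_of_lt hma)
          · by_contra hcon
            push_neg at hcon
            have hblt : w < p.2 := lt_of_le_of_ne hcon (fun h => hpb h.symm)
            by_cases haM : ∃ qa ∈ M, qa.1 = a
            · obtain ⟨qa, hqaM, hqa1⟩ := haM
              have hw1 : qa.2 < w := K2 qa hqaM hqa1
              exact hnc p hpM qa hqaM
                (mk_cross1 (by rw [hp1, hqa1]; exact hma) (lt_trans hw1 hblt))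
            · push_neg at haM
              have hblk : Blk acc mr wr M m w := by
                refine ⟨hacc2, ?_, ?_, ?_, ?_⟩
                · intro hmem
                  exact absurd (K1 (m, w) hmem rfl) (not_lt.mpr hma.le)
                · intro w' hw'
                  by_cases hw'b : w' = w
                  · subst hw'b
                    exact absurd (K1 (m, w') hw' rfl) (not_lt.mpr hma.le)
                  · exact hman2 w' (hMM' (m, w') hw' hma.ne hw'b)
                · intro m' hm'
                  exact lt_trans (hwom2 a heab) (hbw m' hm')
                · intro q hq
                  by_cases hq1 : q.1 = a
                  · exact absurd hq1 (haM q hq)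
                  · by_cases hq2 : q.2 = w
                    · rw [crosses_iff]
                      rintro (⟨h1, h2⟩ | ⟨h1, h2⟩) <;> rw [hq2] at h2 <;>
                        exact lt_irrefl _ h2
                    · exact hnc2 q (hMM' q hq hq1 hq2)
              exact absurd ((hinv m w hblk).2 p hpM hp1) (not_lt.mpr hcon)
      · -- B1b : w < b
        by_cases hawM : (a, w) ∈ M
        · constructor
          · intro p hp hp2
            rw [memM'] at hp
            rcases hp with rfl | ⟨hpM, hp1, hpb⟩
            · exact absurd hp2 (ne_of_gt hwlt)
            · have hpaw : p = (a, w) := hM p hpM (a, w) hawM (Or.inr (by rw [hp2]))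
              rw [hpaw] at hp1
              exact absurd rfl hp1
          · intro p hp hp1
            rw [memM'] at hp
            rcases hp with rfl | ⟨hpM, hpa, hpb⟩
            · exact absurd hp1.symm (ne_of_lt hma)
            · by_contra hcon
              push_neg at hcon
              have hpw : p.2 ≠ w := by
                intro h
                have hpeq := hM p hpM (a, w) hawM (Or.inr (by rw [h]))
                rw [hpeq] at hp1
                exact (ne_of_lt hma) hp1.symm
              have hwp : w < p.2 := lt_of_le_of_ne hcon (fun h => hpw h.symm)
              exact hnc p hpM (a, w) hawM (mk_cross1 (by rw [hp1]; exact hma) hwp)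
        · by_cases haMlt : ∃ qa ∈ M, qa.1 = a ∧ qa.2 < w
          · obtain ⟨qa, hqaM, hqa1, hqa2⟩ := haMlt
            constructor
            · intro p hp hp2
              rw [memM'] at hp
              rcases hp with rfl | ⟨hpM, hp1, hpb⟩
              · exact absurd hp2 (ne_of_gt hwlt)
              · have hnc3 := hnc p hpM qa hqaM
                have hnlt : ¬ p.1 < qa.1 := by
                  intro hlt
                  have hle := noncross1 hnc3 hlt
                  rw [hp2] at hle
                  exact absurd hqa2 (not_lt.mpr hle)
                rw [hqa1] at hnlt
                push_neg at hnlt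
                have hap : a < p.1 := lt_of_le_of_ne hnlt (fun h => hp1 h.symm)
                exact lt_trans hma hap
            · intro p hp hp1
              rw [memM'] at hp
              rcases hp with rfl | ⟨hpM, hpa, hpb⟩
              · exact absurd hp1.symm (ne_of_lt hma)
              · by_contra hcon
                push_neg at hcon
                have hpw : p.2 ≠ w := by
                  intro h
                  have hpmw : p = (m, w) := Prod.ext hp1 h
                  rw [hpmw] at hpM
                  exact hnot2 (hMM' (m, w) hpM (ne_of_lt hma) (ne_of_lt hwlt))
                have hwp : w < p.2 := lt_of_le_of_ne hcon (fun h => hpw h.symm)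
                exact hnc p hpM qa hqaM
                  (mk_cross1 (by rw [hp1, hqa1]; exact hma) (lt_trans hqa2 hwp))
          · push_neg at haMlt
            have hnotM : (m, w) ∉ M :=
              fun h => hnot2 (hMM' (m, w) h (ne_of_lt hma) (ne_of_lt hwlt))
            have hblk : Blk acc mr wr M m w := by
              refine ⟨hacc2, hnotM, ?_, ?_, ?_⟩
              · intro w' hw'
                by_cases hw'b : w' = b
                · subst hw'b
                  exact absurd (K1 (m, w') hw' rfl) (not_lt.mpr hma.le)
                · exact hman2 w' (hMM' (m, w') hw' (ne_of_lt hma) hw'b)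
              · intro m' hm'
                by_cases hm'a : m' = a
                · subst hm'a
                  exact absurd hm' hawM
                · exact hwom2 m' (hMM' (m', w) hm' hm'a (ne_of_lt hwlt))
              · intro q hq
                by_cases hq1 : q.1 = a
                · have hwq : w ≤ q.2 := haMlt q hq hq1
                  rw [crosses_iff]
                  rintro (⟨h1, h2⟩ | ⟨h1, h2⟩)
                  · exact absurd h2 (not_lt.mpr hwq)
                  · rw [hq1] at h1
                    exact absurd hma (not_lt.mpr h1.le)
                · by_cases hq2 : q.2 = b
                  · have haq : a < q.1 := K1 q hq hq2
                    rw [crosses_iff]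
                    rintro (⟨h1, h2⟩ | ⟨h1, h2⟩)
                    · rw [hq2] at h2
                      exact absurd h2 (not_lt.mpr hwlt.le)
                    · exact absurd (lt_trans h1 hma) (not_lt.mpr haq.le)
                  · exact hnc2 q (hMM' q hq hq1 hq2)
            obtain ⟨hc1, hc2⟩ := hinv m w hblk
            constructor
            · intro p hp hp2
              rw [memM'] at hp
              rcases hp with rfl | ⟨hpM, _, _⟩
              · exact absurd hp2 (ne_of_gt hwlt)
              · exact hc1 p hpM hp2
            · intro p hp hp1
              rw [memM'] at hp
              rcases hp with rfl | ⟨hpM, _, _⟩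
              · exact absurd hp1.symm (ne_of_lt hma)
              · exact hc2 p hpM hp1
    · -- CASE m = a
      subst hma
      have hmaw : mr m w < mr m b := hman2 b heab
      have hwb : w ≠ b := fun h => hne (by rw [h])
      have hanotinM : (m, w) ∉ M := fun hmem => absurd (hbm w hmem) (not_lt.mpr hmaw.le)
      have hliftA : (∀ q ∈ M, q.2 ≠ b) → Blk acc mr wr M m w := by
        intro hnob
        refine ⟨hacc2, hanotinM, ?_, ?_, ?_⟩
        · intro w' hw'
          exact lt_trans hmaw (hbm w' hw')
        · intro m' hm'
          have hm'a : m' ≠ m := fun h => hanotinM (h ▸ hm')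
          exact hwom2 m' (hMM' (m', w) hm' hm'a hwb)
        · intro q hq
          by_cases hq1 : q.1 = m
          · rw [crosses_iff]
            rintro (⟨h1, h2⟩ | ⟨h1, h2⟩) <;> rw [hq1] at h1 <;> exact lt_irrefl _ h1
          · by_cases hq2 : q.2 = b
            · exact absurd hq2 (hnob q hq)
            · exact hnc2 q (hMM' q hq hq1 hq2)
      have hwgtb : b < w := by
        rcases lt_trichotomy w b with hlt | heq | hgt
        · exfalso
          have hblk : Blk acc mr wr M m w := by
            refine ⟨hacc2, hanotinM, ?_, ?_, ?_⟩
            · intro w' hw'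
              exact lt_trans hmaw (hbm w' hw')
            · intro m' hm'
              have hm'a : m' ≠ m := fun h => hanotinM (h ▸ hm')
              exact hwom2 m' (hMM' (m', w) hm' hm'a hwb)
            · intro q hq
              by_cases hq1 : q.1 = m
              · rw [crosses_iff]
                rintro (⟨h1, h2⟩ | ⟨h1, h2⟩) <;> rw [hq1] at h1 <;> exact lt_irrefl _ h1
              · by_cases hq2 : q.2 = b
                · have haq : m < q.1 := K1 q hq hq2
                  rw [crosses_iff]
                  rintro (⟨h1, h2⟩ | ⟨h1, h2⟩)
                  · rw [hq2] at h2
                    exact absurd h2 (not_lt.mpr hlt.le)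
                  · exact absurd h1 (not_lt.mpr haq.le)
                · exact hnc2 q (hMM' q hq hq1 hq2)
          exact absurd hmaw (not_lt.mpr (hfav w hblk))
        · exact absurd heq hwb
        · exact hgt
      constructor
      · intro p hp hp2
        rw [memM'] at hp
        rcases hp with rfl | ⟨hpM, hp1, hpb⟩
        · exact absurd hp2.symm hwb
        · by_contra hle
          push_neg at hle
          have hplt : p.1 < m := lt_of_le_of_ne hle hp1
          by_cases hbm2 : ∃ q ∈ M, q.2 = b
          · obtain ⟨q, hqM, hq2⟩ := hbm2
            have haq : m < q.1 := K1 q hqM hq2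
            exact hnc p hpM q hqM
              (mk_cross1 (lt_trans hplt haq) (by rw [hq2, hp2]; exact hwgtb))
          · push_neg at hbm2
            exact absurd ((hinv m w (hliftA hbm2)).1 p hpM hp2) (not_lt.mpr hle)
      · intro p hp hp1
        rw [memM'] at hp
        rcases hp with rfl | ⟨hpM, hpa, hpb⟩
        · exact hwgtb
        · exact absurd hp1 hpa
    · -- CASE a < m
      have hbw2 : b ≤ w := noncross2 hncab hma
      rcases eq_or_lt_of_le hbw2 with hweq | hwgt
      · -- B2a : w = b
        exfalso
        subst hweq
        by_cases hmbM : (m, b) ∈ M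
        · exact absurd (hwom2 a heab) (lt_asymm (hbw m hmbM))
        · have hblk : Blk acc mr wr M m b := by
            refine ⟨hacc2, hmbM, ?_, ?_, ?_⟩
            · intro w' hw'
              by_cases hw'b : w' = b
              · subst hw'b
                exact absurd hw' hmbM
              · exact hman2 w' (hMM' (m, w') hw' (ne_of_gt hma) hw'b)
            · intro m' hm'
              exact lt_trans (hwom2 a heab) (hbw m' hm')
            · intro q hq
              by_cases hq1 : q.1 = a
              · have hqb : q.2 < b := K2 q hq hq1
                rw [crosses_iff]
                rintro (⟨h1, h2⟩ | ⟨h1, h2⟩)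
                · rw [hq1] at h1
                  exact absurd hma (not_lt.mpr h1.le)
                · exact absurd h2 (not_lt.mpr hqb.le)
              · by_cases hq2 : q.2 = b
                · rw [crosses_iff]
                  rintro (⟨h1, h2⟩ | ⟨h1, h2⟩) <;> rw [hq2] at h2 <;> exact lt_irrefl _ h2
                · exact hnc2 q (hMM' q hq hq1 hq2)
          exact absurd (hmax m b hblk) (not_le.mpr hma)
      · -- B2b : b < w
        have hnotM : (m, w) ∉ M :=
          fun h => hnot2 (hMM' (m, w) h (ne_of_gt hma) (ne_of_gt hwgt))
        by_cases hbmatch : ∃ q ∈ M, q.2 = b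
        · obtain ⟨qb, hqbM, hqb2⟩ := hbmatch
          have ham2 : a < qb.1 := K1 qb hqbM hqb2
          have factW : ∀ p ∈ M, p.2 = w → qb.1 < p.1 := by
            intro p hpM hp2
            have hnc3 := hnc p hpM qb hqbM
            have hnlt : ¬ p.1 < qb.1 := by
              intro hplt
              have hle := noncross1 hnc3 hplt
              rw [hp2, hqb2] at hle
              exact absurd hwgt (not_lt.mpr hle)
            push_neg at hnlt
            refine lt_of_le_of_ne hnlt ?_
            intro h
            have heqq := hM qb hqbM p hpM (Or.inl h)
            rw [heqq, hp2] at hqb2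
            exact (ne_of_gt hwgt) hqb2
          rcases lt_trichotomy m qb.1 with hlt | heq | hgt
          · constructor
            · intro p hp hp2
              rw [memM'] at hp
              rcases hp with rfl | ⟨hpM, hp1, hpb⟩
              · exact absurd hp2 (ne_of_lt hwgt)
              · exact lt_trans hlt (factW p hpM hp2)
            · intro p hp hp1
              rw [memM'] at hp
              rcases hp with rfl | ⟨hpM, hpa, hpb⟩
              · exact absurd hp1 (ne_of_lt hma)
              · by_contra hcon
                push_neg at hcon
                have hpw : p.2 ≠ w := by
                  intro h
                  have : p = (m, w) := Prod.ext hp1 h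
                  rw [this] at hpM
                  exact hnotM hpM
                have hwp : w < p.2 := lt_of_le_of_ne hcon (fun h => hpw h.symm)
                exact hnc p hpM qb hqbM
                  (mk_cross1 (by rw [hp1]; exact hlt)
                    (by rw [hqb2]; exact lt_trans hwgt hwp))
          · constructor
            · intro p hp hp2
              rw [memM'] at hp
              rcases hp with rfl | ⟨hpM, hp1, hpb⟩
              · exact absurd hp2 (ne_of_lt hwgt)
              · rw [heq]
                exact factW p hpM hp2
            · intro p hp hp1
              rw [memM'] at hp
              rcases hp with rfl | ⟨hpM, hpa, hpb⟩
              · exact absurd hp1 (ne_of_lt hma)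
              · exfalso
                have heqq := hM p hpM qb hqbM (Or.inl (by rw [hp1, heq]))
                exact hpb (by rw [heqq, hqb2])
          · exfalso
            have hblk : Blk acc mr wr M m w := by
              refine ⟨hacc2, hnotM, ?_, ?_, ?_⟩
              · intro w' hw'
                by_cases hw'b : w' = b
                · exfalso
                  subst hw'b
                  have heqq := hM (m, w') hw' qb hqbM (Or.inr (by rw [hqb2]))
                  have hmq : m = qb.1 := by rw [← heqq]
                  rw [← hmq] at hgt
                  exact lt_irrefl m hgt
                · exact hman2 w' (hMM' (m, w') hw' (ne_of_gt hma) hw'b)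
              · intro m' hm'
                by_cases hm'a : m' = a
                · exfalso
                  subst hm'a
                  exact hnc (m', w) hm' qb hqbM
                    (mk_cross1 ham2 (by rw [hqb2]; exact hwgt))
                · exact hwom2 m' (hMM' (m', w) hm' hm'a (ne_of_gt hwgt))
              · intro q hq
                by_cases hq1 : q.1 = a
                · have hqb' : q.2 < b := K2 q hq hq1
                  rw [crosses_iff]
                  rintro (⟨h1, h2⟩ | ⟨h1, h2⟩)
                  · rw [hq1] at h1
                    exact absurd h1 (not_lt.mpr hma.le)
                  · exact absurd h2 (not_lt.mpr (le_of_lt (lt_trans hqb' hwgt)))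
                · by_cases hq2 : q.2 = b
                  · have heqq : q = qb := hM q hq qb hqbM (Or.inr (by rw [hq2, hqb2]))
                    rw [crosses_iff]
                    rintro (⟨h1, h2⟩ | ⟨h1, h2⟩)
                    · rw [heqq] at h1
                      exact absurd h1 (not_lt.mpr hgt.le)
                    · rw [hq2] at h2
                      exact absurd h2 (not_lt.mpr hwgt.le)
                  · exact hnc2 q (hMM' q hq hq1 hq2)
            exact absurd (hmax m w hblk) (not_le.mpr hma)
        · exfalso
          push_neg at hbmatch
          have hblk : Blk acc mr wr M m w := by
            refine ⟨hacc2, hnotM, ?_, ?_, ?_⟩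
            · intro w' hw'
              by_cases hw'b : w' = b
              · exfalso
                subst hw'b
                exact hbmatch (m, w') hw' rfl
              · exact hman2 w' (hMM' (m, w') hw' (ne_of_gt hma) hw'b)
            · intro m' hm'
              by_cases hm'a : m' = a
              · exfalso
                subst hm'a
                exact absurd (K2 (m', w) hm' rfl) (not_lt.mpr hwgt.le)
              · exact hwom2 m' (hMM' (m', w) hm' hm'a (ne_of_gt hwgt))
            · intro q hq
              by_cases hq1 : q.1 = a
              · have hqb' : q.2 < b := K2 q hq hq1
                rw [crosses_iff]
                rintro (⟨h1, h2⟩ | ⟨h1, h2⟩)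
                · rw [hq1] at h1
                  exact absurd h1 (not_lt.mpr hma.le)
                · exact absurd h2 (not_lt.mpr (le_of_lt (lt_trans hqb' hwgt)))
              · by_cases hq2 : q.2 = b
                · exact absurd hq2 (hbmatch q hq)
                · exact hnc2 q (hMM' q hq hq1 hq2)
          exact absurd (hmax m w hblk) (not_le.mpr hma)

  · -- Phi increase
    have hPhiM : Phi acc mr M
        = (∑ p ∈ M.filter (fun p => p.1 = a ∨ p.2 = b), wfn acc mr p) + Phi acc mr M0 := by
      unfold Phi
      rw [hM0def]
      exact (Finset.sum_filter_add_sum_filter_not M _ _).symm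
    have habnotin : (a, b) ∉ M0 := by simp [hM0def]
    have hPhiM' : Phi acc mr M' = wfn acc mr (a, b) + Phi acc mr M0 := by
      unfold Phi
      rw [hM'def]
      exact Finset.sum_insert habnotin
    set P : ℕ := (n + 1) ^ (n - 1 - (a : ℕ)) with hPdef
    set R : ℕ := n - rnk acc mr a b with hRdef
    have hP1 : 1 ≤ P := Nat.one_le_pow _ _ (by omega)
    have hR1 : 1 ≤ R := by have := rnk_lt_n acc mr a b; omega
    have hwab : wfn acc mr (a, b) = P * R := rfl
    have hb1 : (∑ p ∈ M.filter (fun p => p.1 = a), wfn acc mr p) ≤ P * (R - 1) := by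
      rcases Finset.eq_empty_or_nonempty (M.filter (fun p => p.1 = a)) with he | ⟨x, hx⟩
      · rw [he]; simp
      · have hsingle : M.filter (fun p => p.1 = a) = {x} := by
          rw [Finset.eq_singleton_iff_unique_mem]
          refine ⟨hx, fun y hy => ?_⟩
          rw [Finset.mem_filter] at hx hy
          exact hM y hy.1 x hx.1 (Or.inl (hy.2.trans hx.2.symm))
        rw [hsingle, Finset.sum_singleton]
        rw [Finset.mem_filter] at hx
        obtain ⟨x1, x2⟩ := x
        obtain ⟨hxM, hx1⟩ := hx
        simp only at hx1
        rw [hx1] at hxM ⊢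
        have hmr : mr a b < mr a x2 := hbm x2 hxM
        have hrnk : rnk acc mr a b < rnk acc mr a x2 := rnk_lt_rnk acc mr hbacc hmr
        have hle : n - rnk acc mr a x2 ≤ R - 1 := by rw [hRdef]; omega
        calc wfn acc mr (a, x2) = P * (n - rnk acc mr a x2) := rfl
          _ ≤ P * (R - 1) := Nat.mul_le_mul_left _ hle
    have hb2 : (∑ p ∈ M.filter (fun p => p.1 ≠ a ∧ p.2 = b), wfn acc mr p) ≤ P - 1 := by
      rcases Finset.eq_empty_or_nonempty (M.filter (fun p => p.1 ≠ a ∧ p.2 = b)) with he | ⟨x, hx⟩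
      · rw [he]; simp
      · have hsingle : M.filter (fun p => p.1 ≠ a ∧ p.2 = b) = {x} := by
          rw [Finset.eq_singleton_iff_unique_mem]
          refine ⟨hx, fun y hy => ?_⟩
          rw [Finset.mem_filter] at hx hy
          exact hM y hy.1 x hx.1 (Or.inr (hy.2.2.trans hx.2.2.symm))
        rw [hsingle, Finset.sum_singleton]
        rw [Finset.mem_filter] at hx
        obtain ⟨x1, x2⟩ := x
        obtain ⟨hxM, hx1, hx2⟩ := hx
        simp only at hx1 hx2
        rw [hx2] at hxM ⊢
        have hax1 : a < x1 := K1 (x1, b) hxM rfl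
        have hax1' : (a : ℕ) < (x1 : ℕ) := hax1
        have hx1n : (x1 : ℕ) < n := x1.isLt
        have h1 : wfn acc mr (x1, b) ≤ (n + 1) ^ (n - 1 - (x1 : ℕ)) * n :=
          Nat.mul_le_mul_left _ (Nat.sub_le _ _)
        have h2 : (n + 1) ^ (n - 1 - (x1 : ℕ)) * n < (n + 1) ^ (n - 1 - (x1 : ℕ)) * (n + 1) :=
          mul_lt_mul_of_pos_left (by omega) (pow_pos (by omega) _)
        have h3 : (n + 1) ^ (n - 1 - (x1 : ℕ)) * (n + 1) = (n + 1) ^ (n - 1 - (x1 : ℕ) + 1) :=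
          (pow_succ _ _).symm
        have h4 : n - 1 - (x1 : ℕ) + 1 ≤ n - 1 - (a : ℕ) := by omega
        have h5 : (n + 1) ^ (n - 1 - (x1 : ℕ) + 1) ≤ P :=
          Nat.pow_le_pow_right (by omega) h4
        omega
    have hbound : (∑ p ∈ M.filter (fun p => p.1 = a ∨ p.2 = b), wfn acc mr p)
        ≤ P * (R - 1) + (P - 1) := by
      have hsplit : M.filter (fun p => p.1 = a ∨ p.2 = b)
          = M.filter (fun p => p.1 = a) ∪ M.filter (fun p => p.1 ≠ a ∧ p.2 = b) := by
        ext q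
        simp only [Finset.mem_filter, Finset.mem_union]
        tauto
      have hdisj : Disjoint (M.filter (fun p => p.1 = a))
          (M.filter (fun p => p.1 ≠ a ∧ p.2 = b)) := by
        rw [Finset.disjoint_left]
        intro q hq1 hq2
        rw [Finset.mem_filter] at hq1 hq2
        exact hq2.2.1 hq1.2
      rw [hsplit, Finset.sum_union hdisj]
      omega
    have hPR : P * (R - 1) + P = P * R := by
      have h : R - 1 + 1 = R := by omega
      calc P * (R - 1) + P = P * (R - 1 + 1) := by ring
        _ = P * R := by rw [h]
    rw [hPhiM, hPhiM', hwab]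
    omega


end WSNM

/-- For every instance with `n` men and `n` women with strict (possibly
incomplete) preference lists, a weakly stable noncrossing matching exists.
`acc m w` means `w` is acceptable to `m` (acceptability is mutual by using a
single relation), `mr m w` is the rank of `w` in `m`'s list and `wr w m` the
rank of `m` in `w`'s list (lower = more preferred); strictness says ranks are
injective among acceptable partners. -/
theorem WSNM_exists (n : ℕ) (acc : Fin n → Fin n → Prop)
    (mr : Fin n → Fin n → ℕ) (wr : Fin n → Fin n → ℕ)
    (hmr : ∀ m w w', acc m w → acc m w' → mr m w = mr m w' → w = w')
    (hwr : ∀ w m m', acc m w → acc m' w → wr w m = wr w m' → m = m') :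
    ∃ M : Finset (Fin n × Fin n),
      IsMatching M ∧
      (∀ p ∈ M, acc p.1 p.2) ∧
      Noncrossing M ∧
      ∀ m w : Fin n, ¬ (acc m w ∧ (m, w) ∉ M ∧
        (∀ w', (m, w') ∈ M → mr m w < mr m w') ∧
        (∀ m', (m', w) ∈ M → wr w m < wr w m') ∧
        (∀ q ∈ M, ¬ Crosses (m, w) q)) := by
  classical
  set VP : Finset (Fin n × Fin n) → Prop :=
    fun M => IsMatching M ∧ (∀ p ∈ M, acc p.1 p.2) ∧ Noncrossing M ∧ SInv acc mr wr M
    with hVP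
  set V : Finset (Finset (Fin n × Fin n)) := Finset.univ.powerset.filter VP with hV
  have hVne : V.Nonempty := by
    refine ⟨∅, ?_⟩
    rw [hV, Finset.mem_filter]
    refine ⟨Finset.mem_powerset.mpr (Finset.subset_univ _), ?_, ?_, ?_, ?_⟩
    · intro p hp; exact absurd hp (Finset.notMem_empty p)
    · intro p hp; exact absurd hp (Finset.notMem_empty p)
    · intro p hp; exact absurd hp (Finset.notMem_empty p)
    · intro m w _
      constructor
      · intro p hp; exact absurd hp (Finset.notMem_empty p)
      · intro p hp; exact absurd hp (Finset.notMem_empty p)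
  obtain ⟨M, hMV, hMmax⟩ := V.exists_max_image (fun M => Phi acc mr M) hVne
  rw [hV, Finset.mem_filter] at hMV
  obtain ⟨-, hMat, hMacc, hMnc, hMinv⟩ := hMV
  refine ⟨M, hMat, hMacc, hMnc, ?_⟩
  intro m w hcon
  have hblk0 : Blk acc mr wr M m w := hcon
  -- the set of blocking pairs
  have hPne : (Finset.univ.filter
      (fun p : Fin n × Fin n => Blk acc mr wr M p.1 p.2)).Nonempty :=
    ⟨(m, w), by simp only [Finset.mem_filter, Finset.mem_univ, true_and]; exact hblk0⟩
  set P : Finset (Fin n × Fin n) :=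
    Finset.univ.filter (fun p : Fin n × Fin n => Blk acc mr wr M p.1 p.2) with hP
  have hPblk : ∀ p ∈ P, Blk acc mr wr M p.1 p.2 := by
    intro p hp
    rw [hP, Finset.mem_filter] at hp
    exact hp.2
  have hIne : (P.image Prod.fst).Nonempty := hPne.image _
  set a : Fin n := (P.image Prod.fst).max' hIne with ha
  have hmax : ∀ m' w', Blk acc mr wr M m' w' → m' ≤ a := by
    intro m' w' hb
    refine Finset.le_max' _ _ ?_
    refine Finset.mem_image.mpr ⟨(m', w'), ?_, rfl⟩
    rw [hP, Finset.mem_filter]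
    exact ⟨Finset.mem_univ _, hb⟩
  have hamem : a ∈ P.image Prod.fst := Finset.max'_mem _ _
  obtain ⟨pa, hpaP, hpa1⟩ := Finset.mem_image.mp hamem
  have hPane : (P.filter (fun p => p.1 = a)).Nonempty :=
    ⟨pa, Finset.mem_filter.mpr ⟨hpaP, hpa1⟩⟩
  obtain ⟨p0, hp0mem, hp0min⟩ :=
    (P.filter (fun p => p.1 = a)).exists_min_image (fun p => mr a p.2) hPane
  rw [Finset.mem_filter] at hp0mem
  obtain ⟨hp0P, hp01⟩ := hp0mem
  set b : Fin n := p0.2 with hbdef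
  have hbab : Blk acc mr wr M a b := by
    have := hPblk p0 hp0P
    rwa [hp01] at this
  have hfav : ∀ w', Blk acc mr wr M a w' → mr a b ≤ mr a w' := by
    intro w' hb
    have hmem : (a, w') ∈ P.filter (fun p => p.1 = a) := by
      rw [Finset.mem_filter, hP, Finset.mem_filter]
      exact ⟨⟨Finset.mem_univ _, hb⟩, rfl⟩
    exact hp0min (a, w') hmem
  obtain ⟨M', h1, h2, h3, h4, h5⟩ :=
    step acc mr wr M hMat hMacc hMnc hMinv a b hbab hmax hfav
  have hM'V : M' ∈ V := by
    rw [hV, Finset.mem_filter]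
    exact ⟨Finset.mem_powerset.mpr (Finset.subset_univ _), h1, h2, h3, h4⟩
  exact absurd (hMmax M' hM'V) (not_le.mpr h5)
end

section
/- If a matching M on n men and n women is noncrossing and (m_i, w_x) is a pair crossing no edge of M, then the matching obtained from M by removing the pairs containing m_i and w_x (if any) and adding (m_i, w_x) is again noncrossing. -/
section

variable {n : ℕ}

theorem Crosses.symm {p q : Fin n × Fin n} (h : Crosses p q) : Crosses q p := by
  unfold Crosses at *
  linarith [show ((q.1 : ℤ) - p.1) * ((q.2 : ℤ) - p.2) = ((p.1 : ℤ) - q.1) * ((p.2 : ℤ) - q.2) by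
    ring]

theorem not_crosses_self (p : Fin n × Fin n) : ¬ Crosses p p := by
  simp [Crosses]

theorem Noncrossing.subset {M N : Finset (Fin n × Fin n)} (hM : Noncrossing M) (hNM : N ⊆ M) :
    Noncrossing N :=
  fun p hp q hq => hM p (hNM hp) q (hNM hq)

theorem Noncrossing.insert {M : Finset (Fin n × Fin n)} (hM : Noncrossing M)
    {p : Fin n × Fin n} (hp : ∀ q ∈ M, ¬ Crosses p q) : Noncrossing (insert p M) := by
  simp only [Noncrossing, Finset.mem_insert]
  rintro a (rfl | ha) b (rfl | hb)
  · exact not_crosses_self _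
  · exact hp b hb
  · exact fun hab => hp a ha hab.symm
  · exact hM a ha b hb

end

theorem insert_noncrossing_general {n : ℕ} (M : Finset (Fin n × Fin n))
    (hnc : Noncrossing M) (i x : Fin n)
    (h : ∀ q ∈ M, ¬ Crosses (i, x) q) :
    Noncrossing (insert (i, x) (M.filter (fun q => q.1 ≠ i ∧ q.2 ≠ x))) :=
  (hnc.subset (Finset.filter_subset _ M)).insert fun q hq => h q (Finset.mem_filter.1 hq).1

/-- If `M` is noncrossing and the pair `(i, x)` crosses no edge of `M`, then
removing the pairs containing `m_i` and `w_x` (if any) and adding `(i, x)`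
yields a noncrossing matching. -/
theorem insert_noncrossing {n : ℕ} (M : Finset (Fin n × Fin n))
    (hM : IsMatching M) (hnc : Noncrossing M) (i x : Fin n)
    (h : ∀ q ∈ M, ¬ Crosses (i, x) q) :
    Noncrossing (insert (i, x) (M.filter (fun q => q.1 ≠ i ∧ q.2 ≠ x))) :=
  insert_noncrossing_general M hnc i x h
end

section
/- Let M be a noncrossing matching and m_i an unmatched man. If m_prev is the matched man closest to m_i lying above him (i.e., the largest index p < i with m_p matched) with partner w_first, and m_next is the matched man closest to m_i lying below him (smallest index q > i with m_q matched) with partner w_last, then a woman w_x is accessible to m_i (the pair (m_i, w_x) crosses no edge of M) if and only if first ≤ x ≤ last, where first is the index of w_first and last is the index of w_last. -/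
theorem crosses_iff_s6 {n : ℕ} {i j x y : Fin n} :
    Crosses (i, x) (j, y) ↔ (j < i ∧ x < y) ∨ (i < j ∧ y < x) := by
  simp only [Crosses, mul_neg_iff, Fin.lt_def]
  omega

theorem Noncrossing.snd_le_snd_of_fst_le {n : ℕ} {M : Finset (Fin n × Fin n)}
    (hM : IsMatching M) (hnc : Noncrossing M) {j p y f : Fin n}
    (hjy : (j, y) ∈ M) (hpf : (p, f) ∈ M) (hjp : j ≤ p) : y ≤ f := by
  rcases hjp.eq_or_lt with rfl | hlt
  · exact ((Prod.ext_iff.1 (hM _ hjy _ hpf (Or.inl rfl))).2).le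
  · exact not_lt.1 fun hfy => hnc _ hjy _ hpf (crosses_iff_s6.2 (Or.inr ⟨hlt, hfy⟩))

theorem accessible_range_general {n : ℕ} (M : Finset (Fin n × Fin n))
    (hM : IsMatching M) (hnc : Noncrossing M)
    (i p q first last : Fin n)
    (hp : p < i) (hpM : (p, first) ∈ M)
    (hpClose : ∀ k : Fin n, p < k → k < i → ∀ y : Fin n, (k, y) ∉ M)
    (hq : i < q) (hqM : (q, last) ∈ M)
    (hqClose : ∀ k : Fin n, i < k → k < q → ∀ y : Fin n, (k, y) ∉ M) :
    ∀ x : Fin n, (∀ e ∈ M, ¬ Crosses (i, x) e) ↔ (first ≤ x ∧ x ≤ last) := by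
  intro x
  constructor
  · intro hx
    have hfirst := hx _ hpM
    have hlast := hx _ hqM
    rw [crosses_iff_s6] at hfirst hlast
    exact ⟨not_lt.1 fun h => hfirst (Or.inl ⟨hp, h⟩), not_lt.1 fun h => hlast (Or.inr ⟨hq, h⟩)⟩
  · rintro ⟨hfx, hxl⟩ ⟨j, y⟩ hjy hcross
    rcases crosses_iff_s6.1 hcross with ⟨hji, hxy⟩ | ⟨hij, hyx⟩
    · have hjp : j ≤ p := not_lt.1 fun hpj => hpClose j hpj hji y hjy
      have hyf := hnc.snd_le_snd_of_fst_le hM hjy hpM hjp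
      exact lt_irrefl x (hxy.trans_le (hyf.trans hfx))
    · have hqj : q ≤ j := not_lt.1 fun hjq => hqClose j hij hjq y hjy
      have hly := hnc.snd_le_snd_of_fst_le hM hqM hjy hqj
      exact lt_irrefl x ((hxl.trans hly).trans_lt hyx)

/-- Let `M` be a noncrossing matching and `m_i` an unmatched man. If `m_p`
(`p < i`) is the matched man closest to `m_i` above him, with partner
`w_first`, and `m_q` (`q > i`) is the matched man closest to `m_i` below him,
with partner `w_last`, then `w_x` is accessible to `m_i` (the pair `(i, x)`
crosses no edge of `M`) iff `first ≤ x ≤ last`. -/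
theorem accessible_range {n : ℕ} (M : Finset (Fin n × Fin n))
    (hM : IsMatching M) (hnc : Noncrossing M)
    (i p q first last : Fin n)
    (hi : ∀ x : Fin n, (i, x) ∉ M)
    (hp : p < i) (hpM : (p, first) ∈ M)
    (hpClose : ∀ k : Fin n, p < k → k < i → ∀ y : Fin n, (k, y) ∉ M)
    (hq : i < q) (hqM : (q, last) ∈ M)
    (hqClose : ∀ k : Fin n, i < k → k < q → ∀ y : Fin n, (k, y) ∉ M) :
    ∀ x : Fin n, (∀ e ∈ M, ¬ Crosses (i, x) e) ↔ (first ≤ x ∧ x ≤ last) :=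
  accessible_range_general M hM hnc i p q first last hp hpM hpClose hq hqM hqClose
end
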